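/- arXiv:1103.0856 — 2 statements merged into one kernel-verified Lean document; each statement's English description precedes it below -/
import Mathlib

section
/- Let r = [m_1,...,m_k] with 0 < r < 1 and k ≥ 2. Define I_1(r) = [0, r_1] and I_2(r) = [r_2, 1], where r_1 = [m_1,...,m_{k-1}] and r_2 = [m_1,...,m_{k-1}, m_k − 1] when k is odd, and r_1 = [m_1,...,m_{k-1}, m_k − 1] and r_2 = [m_1,...,m_{k-1}] when k is even. If s = [n_1,...,n_t] is a rational number with 0 < s ≤ 1 satisfying: t ≥ k, n_i = m_i for i = 1,...,k−1, and (n_k ≥ m_k or (n_k = m_k − 1 and t > k)), then s ∉ I_1(r) ∪ I_2(r). -/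
/-- The exponent-letter word `u_{q/p} = a^{ε₁} b^{ε₂} ⋯ a^{ε_{2p-1}} b^{ε_{2p}}`,
encoded as a list of letters `(generator, sign)` with `true = a`, `false = b`,
and sign `true` meaning exponent `+1`.  Here (0-indexed) `ε_{j+1} = (-1)^⌊jq/p⌋`. -/
def epsWord (p q : ℕ) : List (Bool × Bool) :=
  (List.range (2 * p)).map fun j => (decide (j % 2 = 0), decide ((j * q / p) % 2 = 0))

/-- The S-sequence of slope `q/p`: run lengths of the sign pattern `⌊jq/p⌋ mod 2`. -/
def signRuns (p q : ℕ) : List ℕ :=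
  (((List.range (2 * p)).map fun j => (j * q / p) % 2).splitBy (· == ·)).map List.length

/-- The S-sequence of a rational number. -/
def SseqQ (r : ℚ) : List ℕ := signRuns r.den r.num.toNat

/-- Continued fraction `[m₁, m₂, …, m_k] = 1/(m₁ + 1/(m₂ + ⋯ + 1/m_k))`. -/
def contFrac : List ℕ → ℚ
  | [] => 0
  | m :: l => 1 / (m + contFrac l)

/-!
Write `N = M ++ n :: L`. Then `s`, `contFrac M` and `contFrac (M ++ [m_k - 1])` are the values
of the single map `x ↦ [m_1, …, m_{k-1} + x]` at `x = [n, L]`, `x = 0` and `x = 1 / (m_k - 1)`,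
and the hypothesis on `n_k` says exactly that `0 < [n, L] < 1 / (m_k - 1)`. Each level of the
continued fraction reverses order on `x ≥ 0`, so this map is monotone or antitone according to the
parity of `k - 1`; hence `s` lies strictly between `r₁` and `r₂`.
-/

lemma List.exists_eq_append_cons_of_getD_eq {α : Type*} {M N : List α} (d : α)
    (hlen : M.length < N.length) (h : ∀ i < M.length, N.getD i d = M.getD i d) :
    ∃ n L, N = M ++ n :: L := by
  have htake : N.take M.length = M := by
    refine List.ext_getElem (by simp; omega) fun i hiN hiM => ?_
    have := h i hiM
    rw [List.getD_eq_getElem _ _ (by omega), List.getD_eq_getElem _ _ hiM] at this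
    simpa using this
  refine ⟨N[M.length], N.drop (M.length + 1), ?_⟩
  conv_lhs => rw [← List.take_append_drop M.length N, htake, List.drop_eq_getElem_cons hlen]

lemma not_mem_Icc_union_Icc_of_mem_Ioo {α : Type*} [Preorder α] {a b c d x : α}
    (h : x ∈ Set.Ioo a b) : x ∉ Set.Icc c a ∪ Set.Icc b d := by
  rintro (hx | hx)
  · exact h.1.not_ge hx.2
  · exact h.2.not_ge hx.1

def contFracTail : List ℕ → ℚ → ℚ
  | [], x => x
  | m :: l, x => 1 / (m + contFracTail l x)

lemma contFracTail_zero (M : List ℕ) : contFracTail M 0 = contFrac M := by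
  induction M with
  | nil => rfl
  | cons m l ih => simp [contFracTail, contFrac, ih]

lemma contFrac_append (M L : List ℕ) : contFrac (M ++ L) = contFracTail M (contFrac L) := by
  induction M with
  | nil => rfl
  | cons m l ih => simp [contFracTail, contFrac, ih]

lemma contFracTail_nonneg {M : List ℕ} {x : ℚ} (hx : 0 ≤ x) : 0 ≤ contFracTail M x := by
  induction M with
  | nil => exact hx
  | cons m l ih => simp only [contFracTail]; positivity

lemma contFrac_nonneg (L : List ℕ) : 0 ≤ contFrac L := by
  rw [← contFracTail_zero]
  exact contFracTail_nonneg le_rfl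

lemma contFrac_cons_pos {n : ℕ} (hn : 0 < n) (L : List ℕ) : 0 < contFrac (n :: L) := by
  have := contFrac_nonneg L
  simp only [contFrac]
  positivity

lemma contFracTail_strictMonoOn_of_even_strictAntiOn_of_odd {M : List ℕ}
    (hM : ∀ m ∈ M, 0 < m) :
    (Even M.length → StrictMonoOn (contFracTail M) (Set.Ici 0)) ∧
      (Odd M.length → StrictAntiOn (contFracTail M) (Set.Ici 0)) := by
  induction M with
  | nil => exact ⟨fun _ => strictMonoOn_id, fun h => absurd h (by simp)⟩
  | cons m l ih =>
    have hm : (1 : ℚ) ≤ m := by exact_mod_cast hM m List.mem_cons_self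
    obtain ⟨ih_even, ih_odd⟩ := ih fun a ha => hM a (List.mem_cons_of_mem m ha)
    have hden {x : ℚ} (hx : 0 ≤ x) : 0 < (m : ℚ) + contFracTail l x := by
      have := contFracTail_nonneg (M := l) hx
      linarith
    refine ⟨fun he x hx y hy hxy => ?_, fun ho x hx y hy hxy => ?_⟩
    · have := ih_odd (by simpa [Nat.even_add_one] using he) hx hy hxy
      exact one_div_lt_one_div_of_lt (hden hy) (by linarith)
    · have := ih_even (by simpa [Nat.odd_add_one] using ho) hx hy hxy
      exact one_div_lt_one_div_of_lt (hden hx) (by linarith)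

lemma contFrac_append_mem_Ioo_of_even {M L L' : List ℕ} (hM : ∀ m ∈ M, 0 < m)
    (h0 : 0 < contFrac L) (h1 : contFrac L < contFrac L') (he : Even M.length) :
    contFrac (M ++ L) ∈ Set.Ioo (contFrac M) (contFrac (M ++ L')) := by
  have hmono := (contFracTail_strictMonoOn_of_even_strictAntiOn_of_odd hM).1 he
  rw [contFrac_append, contFrac_append, ← contFracTail_zero M]
  exact ⟨hmono Set.self_mem_Ici h0.le h0, hmono h0.le (contFrac_nonneg L') h1⟩

lemma contFrac_append_mem_Ioo_of_odd {M L L' : List ℕ} (hM : ∀ m ∈ M, 0 < m)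
    (h0 : 0 < contFrac L) (h1 : contFrac L < contFrac L') (ho : Odd M.length) :
    contFrac (M ++ L) ∈ Set.Ioo (contFrac (M ++ L')) (contFrac M) := by
  have hanti := (contFracTail_strictMonoOn_of_even_strictAntiOn_of_odd hM).2 ho
  rw [contFrac_append, contFrac_append, ← contFracTail_zero M]
  exact ⟨hanti h0.le (contFrac_nonneg L') h1, hanti Set.self_mem_Ici h0.le h0⟩

lemma contFrac_cons_lt_singleton_pred {n m : ℕ} {L : List ℕ} (hm : 2 ≤ m)
    (hL : ∀ x ∈ L, 0 < x) (h : m ≤ n ∨ (n = m - 1 ∧ L ≠ [])) :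
    contFrac (n :: L) < contFrac [m - 1] := by
  have hpos : (0 : ℚ) < ((m - 1 : ℕ) : ℚ) := by exact_mod_cast (by omega : 0 < m - 1)
  have hden : ((m - 1 : ℕ) : ℚ) < n + contFrac L := by
    rcases h with hle | ⟨rfl, hne⟩
    · have : ((m - 1 : ℕ) : ℚ) < n := by exact_mod_cast (by omega : m - 1 < n)
      linarith [contFrac_nonneg L]
    · obtain ⟨a, L, rfl⟩ := List.exists_cons_of_ne_nil hne
      linarith [contFrac_cons_pos (hL a List.mem_cons_self) L]
  simp only [contFrac, add_zero]
  exact one_div_lt_one_div_of_lt hpos hden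

theorem not_in_I1_union_I2_general (M : List ℕ) (mk : ℕ) (hMpos : ∀ x ∈ M, 0 < x)
    (hmk : 2 ≤ mk)
    (N : List ℕ) (hNpos : ∀ x ∈ N, 0 < x)
    (s : ℚ) (hs : s = contFrac N)
    (k : ℕ) (hk : k = M.length + 1)
    (ht : k ≤ N.length)
    (heq : ∀ i : ℕ, i + 1 < k → N.getD i 0 = (M ++ [mk]).getD i 0)
    (hlast : mk ≤ N.getD (k - 1) 0 ∨ (N.getD (k - 1) 0 = mk - 1 ∧ k < N.length)) :
    s ∉ Set.Icc (0 : ℚ) (if k % 2 = 1 then contFrac M else contFrac (M ++ [mk - 1])) ∪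
        Set.Icc (if k % 2 = 1 then contFrac (M ++ [mk - 1]) else contFrac M) 1 := by
  subst hs hk
  obtain ⟨n, L, rfl⟩ := List.exists_eq_append_cons_of_getD_eq (M := M) (N := N) 0 (by omega)
    fun i hi => by rw [heq i (by omega), List.getD_append _ _ _ _ hi]
  have hn : 0 < n := hNpos n (by simp)
  have hL : ∀ x ∈ L, 0 < x := fun x hx => hNpos x (by simp [hx])
  have hlt : contFrac (n :: L) < contFrac [mk - 1] := by
    refine contFrac_cons_lt_singleton_pred hmk hL ?_
    simpa [List.getD_append_right, List.ne_nil_iff_length_pos] using hlast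
  rcases Nat.even_or_odd M.length with he | ho
  · have hk : (M.length + 1) % 2 = 1 := by rw [Nat.even_iff] at he; omega
    simp only [hk, if_true]
    exact not_mem_Icc_union_Icc_of_mem_Ioo
      (contFrac_append_mem_Ioo_of_even hMpos (contFrac_cons_pos hn L) hlt he)
  · have hk : (M.length + 1) % 2 = 0 := by rw [Nat.odd_iff] at ho; omega
    simp only [hk, if_false, zero_ne_one]
    exact not_mem_Icc_union_Icc_of_mem_Ioo
      (contFrac_append_mem_Ioo_of_odd hMpos (contFrac_cons_pos hn L) hlt ho)

/-- with `r = [m₁,…,m_k] = contFrac (M ++ [mk])`, `k ≥ 2`, if the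
continued fraction `[n₁,…,n_t]` of `s` satisfies `t ≥ k`, `nᵢ = mᵢ` for `i < k`, and
`n_k ≥ m_k` or (`n_k = m_k − 1` and `t > k`), then `s ∉ I₁(r) ∪ I₂(r)`, where
`I₁(r) = [0, r₁]`, `I₂(r) = [r₂, 1]` and `(r₁, r₂)` are as in the parity rule. -/
theorem not_in_I1_union_I2 (M : List ℕ) (mk : ℕ) (hM : M ≠ []) (hMpos : ∀ x ∈ M, 0 < x)
    (hmk : 2 ≤ mk)
    (N : List ℕ) (hN : N ≠ []) (hNpos : ∀ x ∈ N, 0 < x)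
    (hNlast : 1 < N.length → ∀ x ∈ N.getLast?, 2 ≤ x)
    (s : ℚ) (hs : s = contFrac N) (hs0 : 0 < s) (hs1 : s ≤ 1)
    (k : ℕ) (hk : k = M.length + 1)
    (ht : k ≤ N.length)
    (heq : ∀ i : ℕ, i + 1 < k → N.getD i 0 = (M ++ [mk]).getD i 0)
    (hlast : mk ≤ N.getD (k - 1) 0 ∨ (N.getD (k - 1) 0 = mk - 1 ∧ k < N.length)) :
    s ∉ Set.Icc (0 : ℚ) (if k % 2 = 1 then contFrac M else contFrac (M ++ [mk - 1])) ∪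
        Set.Icc (if k % 2 = 1 then contFrac (M ++ [mk - 1]) else contFrac M) 1 :=
  not_in_I1_union_I2_general M mk hMpos hmk N hNpos s hs k hk ht heq hlast
end

section
/- Let m ≥ 1 and let r = [m_1,...,m_k] with m_1 = m and k ≥ 2. If m_2 = 1 then the palindromic block S_1 of the decomposition S(r) = (S_1,S_2,S_1,S_2) contains two consecutive terms (m+1, m+1). If m_2 ≥ 2 and r ≠ 2/(2m+1) (i.e., r ≠ [m,2]), then S_2 contains two consecutive terms (m, m). -/
/-!
Write `r = 1 / (m + x)` with `x = [m₂, …] = t / q ∈ (0, 1)` in lowest terms, so `r = q / (mq + t)` and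
the `i`-th term of `S(r)` is `⌈(i+1)(mq+t)/q⌉ - ⌈i(mq+t)/q⌉ = m + ⌈(i+1)t/q⌉ - ⌈it/q⌉`. If `m₂ = 1`
then `1/2 < x < 1` and the first two terms are `m + 1`; if `m₂ ≥ 2` and `r ≠ [m, 2]` then `x < 1/2`
and the last two terms are `m`. Now `S(r)` is `S₁` followed by a block starting with `m`, and by
palindromicity its reversal is `S₂` followed by a block starting with `m + 1`, so the pair cannot
straddle the boundary and lies inside `S₁`, resp. `S₂`.
-/

open List

namespace Nat

theorem ceilDiv_eq_of_lt_of_le {n a c : ℕ} (h₁ : a * c < n + a) (h₂ : n ≤ a * c) :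
    n ⌈/⌉ a = c := by
  have ha : 0 < a := by nlinarith
  rw [ceilDiv_eq_add_pred_div]
  exact Nat.div_eq_of_lt_le (by rw [mul_comm]; omega) (by rw [add_mul, one_mul, mul_comm]; omega)

theorem mul_ceilDiv_lt (n : ℕ) {a : ℕ} (ha : 0 < a) : a * (n ⌈/⌉ a) < n + a := by
  rw [ceilDiv_eq_add_pred_div, mul_comm]
  have := Nat.div_mul_le_self (n + a - 1) a
  omega

theorem mul_add_ceilDiv {a : ℕ} (ha : 0 < a) (k n : ℕ) : (a * k + n) ⌈/⌉ a = k + n ⌈/⌉ a := by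
  rw [ceilDiv_eq_add_pred_div, ceilDiv_eq_add_pred_div, Nat.add_sub_assoc ha, add_assoc,
    Nat.mul_add_div ha, Nat.add_sub_assoc ha]

end Nat

namespace Rat

theorem natCast_add_num (n : ℕ) (q : ℚ) : (n + q).num = n * q.den + q.num := by
  have h := mul_den_eq_num (n + q)
  rw [natCast_add_den, add_mul, mul_den_eq_num] at h
  exact_mod_cast h.symm

theorem num_one_div_natCast_add (n : ℕ) {q : ℚ} (hq : 0 < q) : (1 / (n + q)).num = q.den := by
  have : 0 < (n + q).num := num_pos.2 (by positivity)
  rw [one_div, num_inv, natCast_add_den, Int.sign_eq_one_of_pos this, one_mul]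

theorem den_one_div_natCast_add (n : ℕ) {q : ℚ} (hq : 0 < q) :
    (1 / (n + q)).den = n * q.den + q.num.natAbs := by
  have : 0 < q.num := num_pos.2 hq
  rw [one_div, den_inv_of_ne_zero (by positivity), natCast_add_num]
  omega

theorem natAbs_num_div_den {q : ℚ} (hq : 0 ≤ q) : (q.num.natAbs : ℚ) / q.den = q := by
  rw [Nat.cast_natAbs, Int.cast_abs, abs_of_nonneg (by exact_mod_cast num_nonneg.2 hq),
    num_div_den]

end Rat

namespace List

theorem map_range_eq_flatten_replicate {α : Type*} (f g : ℕ → α) {c : ℕ → ℕ} (hc0 : c 0 = 0)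
    (hc : Monotone c) (hfg : ∀ i j, c i ≤ j → j < c (i + 1) → f j = g i) (n : ℕ) :
    (range (c n)).map f = ((range n).map fun i => replicate (c (i + 1) - c i) (g i)).flatten := by
  induction n with
  | zero => simp [hc0]
  | succ n ih =>
    obtain ⟨d, hd⟩ := Nat.exists_eq_add_of_le (hc (Nat.le_add_right n 1))
    rw [hd, range_add, map_append, ih, range_succ, map_append, flatten_append, map_map]
    congr
    simp only [map_cons, map_nil, flatten_cons, flatten_nil, append_nil, eq_replicate_iff,
      length_map, length_range, mem_map, mem_range]
    refine ⟨by omega, ?_⟩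
    rintro _ ⟨k, hk, rfl⟩
    exact hfg n (c n + k) (Nat.le_add_right _ _) (by omega)

theorem prefix_map_range {α : Type*} (f : ℕ → α) {n : ℕ} (hn : 2 ≤ n) :
    [f 0, f 1] <+: (range n).map f := by
  obtain ⟨k, rfl⟩ := Nat.exists_eq_add_of_le hn
  rw [range_add, map_append]
  exact prefix_append _ _

theorem suffix_map_range {α : Type*} (f : ℕ → α) {n : ℕ} (hn : 2 ≤ n) :
    [f (n - 2), f (n - 1)] <:+ (range n).map f := by
  obtain ⟨k, rfl⟩ := Nat.exists_eq_add_of_le' hn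
  rw [range_add, map_append]
  convert suffix_append ((range k).map f) _ using 2
  simp [range_succ]

theorem IsPrefix.pair_of_append {α : Type*} {u : α} {A B : List α} (h : [u, u] <+: A ++ B)
    (hB : B.head? ≠ some u) : [u, u] <+: A := by
  obtain ⟨t, ht⟩ := h
  rcases A with _ | ⟨a, _ | ⟨b, A⟩⟩
  · rw [nil_append] at ht
    simp [← ht] at hB
  · simp only [cons_append, nil_append, cons.injEq] at ht
    simp [← ht.2] at hB
  · simp only [cons_append, cons.injEq] at ht
    obtain ⟨rfl, rfl, -⟩ := ht
    exact ⟨A, rfl⟩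

end List

-- The sign `⌊jq/p⌋ mod 2` equals `i mod 2` exactly for `⌈ip/q⌉ ≤ j < ⌈(i+1)p/q⌉`.
def runLength (p q i : ℕ) : ℕ := (i + 1) * p ⌈/⌉ q - i * p ⌈/⌉ q

theorem runLength_pos {p q : ℕ} (hq : 0 < q) (hqp : q ≤ p) (i : ℕ) : 0 < runLength p q i := by
  have := Nat.mul_ceilDiv_lt (i * p) hq
  have : ¬ (i + 1) * p ⌈/⌉ q ≤ i * p ⌈/⌉ q := by
    rw [ceilDiv_le_iff_le_mul hq]
    nlinarith
  rw [runLength]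
  omega

theorem map_range_signs_eq_flatten {p q : ℕ} (hq : 0 < q) (hqp : q ≤ p) :
    (range (2 * p)).map (fun j => j * q / p % 2) =
      ((range (2 * q)).map fun i => replicate (runLength p q i) (i % 2)).flatten := by
  have hp : 0 < p := by omega
  have h2q : 2 * q * p ⌈/⌉ q = 2 * p := by
    rw [show 2 * q * p = q • (2 * p) by rw [smul_eq_mul]; ring, smul_ceilDiv hq]
  rw [← h2q]
  refine map_range_eq_flatten_replicate (c := fun i => i * p ⌈/⌉ q) _ _ (by simp)
    ((gc_mul_ceilDiv hq).monotone_l.comp fun _ _ h => Nat.mul_le_mul_right p h)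
    (fun i j hij hji => ?_) _
  rw [ceilDiv_le_iff_le_mul hq] at hij
  rw [← not_le, ceilDiv_le_iff_le_mul hq, not_le] at hji
  have : j * q / p = i := le_antisymm
    (Nat.lt_succ_iff.1 ((Nat.div_lt_iff_lt_mul hp).2 (by linarith)))
    ((Nat.le_div_iff_mul_le hp).2 (by linarith))
  rw [this]

theorem signRuns_eq {p q : ℕ} (hq : 0 < q) (hqp : q ≤ p) :
    signRuns p q = (range (2 * q)).map (runLength p q) := by
  rw [signRuns, map_range_signs_eq_flatten hq hqp, splitBy_flatten, map_map]
  · exact map_congr_left fun i _ => length_replicate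
  · simp only [mem_map, mem_range, not_exists, not_and, replicate_eq_nil_iff]
    exact fun i _ => (runLength_pos hq hqp i).ne'
  · simp only [mem_map, forall_exists_index, and_imp]
    rintro _ i _ rfl
    exact isChain_replicate_of_rel _ (beq_self_eq_true _)
  · rw [isChain_map, isChain_range]
    intro i _
    have := runLength_pos hq hqp i
    have := runLength_pos hq hqp (i + 1)
    refine ⟨by simp; omega, by simp; omega, ?_⟩
    simp only [getLast_replicate, head_replicate, beq_eq_false_iff_ne]
    omega

theorem runLength_mul_add {q : ℕ} (hq : 0 < q) (m t i : ℕ) :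
    runLength (m * q + t) q i = m + runLength t q i := by
  have hmono : i * t ⌈/⌉ q ≤ (i + 1) * t ⌈/⌉ q :=
    (gc_mul_ceilDiv hq).monotone_l (Nat.mul_le_mul_right t i.le_succ)
  rw [runLength, runLength, show (i + 1) * (m * q + t) = q * ((i + 1) * m) + (i + 1) * t by ring,
    show i * (m * q + t) = q * (i * m) + i * t by ring, Nat.mul_add_ceilDiv hq,
    Nat.mul_add_ceilDiv hq, add_mul]
  omega

theorem runLength_zero {q t : ℕ} (ht : 0 < t) (htq : t ≤ q) : runLength t q 0 = 1 := by
  rw [runLength, Nat.ceilDiv_eq_of_lt_of_le (c := 1) (by omega) (by omega)]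
  simp

theorem runLength_one {q t : ℕ} (h₁ : q < 2 * t) (h₂ : t ≤ q) : runLength t q 1 = 1 := by
  rw [runLength, Nat.ceilDiv_eq_of_lt_of_le (c := 2) (by omega) (by omega),
    Nat.ceilDiv_eq_of_lt_of_le (c := 1) (by omega) (by omega)]

theorem runLength_two_mul_sub_one {q t : ℕ} (htq : t < q) : runLength t q (2 * q - 1) = 0 := by
  have h₁ : (2 * q - 1 + 1) * t = q * (2 * t) := by
    rw [Nat.sub_add_cancel (by omega)]; ring
  have h₂ : (2 * q - 1) * t = q * (2 * t) - t := by rw [Nat.sub_mul]; ring_nf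
  rw [runLength, h₁, h₂, Nat.ceilDiv_eq_of_lt_of_le (c := 2 * t) (by omega) (by omega),
    Nat.ceilDiv_eq_of_lt_of_le (c := 2 * t) (by omega) (by omega), Nat.sub_self]

theorem runLength_two_mul_sub_two {q t : ℕ} (htq : 2 * t < q) :
    runLength t q (2 * q - 2) = 0 := by
  have h₁ : (2 * q - 2 + 1) * t = q * (2 * t) - t := by
    rw [show 2 * q - 2 + 1 = 2 * q - 1 by omega, Nat.sub_mul]; ring_nf
  have h₂ : (2 * q - 2) * t = q * (2 * t) - 2 * t := by rw [Nat.sub_mul]; ring_nf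
  rw [runLength, h₁, h₂, Nat.ceilDiv_eq_of_lt_of_le (c := 2 * t) (by omega) (by omega),
    Nat.ceilDiv_eq_of_lt_of_le (c := 2 * t) (by omega) (by omega), Nat.sub_self]

theorem contFrac_pos_lt_one {l : List ℕ} (hne : l ≠ []) (hpos : ∀ a ∈ l, 0 < a)
    (hlast : ∀ a ∈ l.getLast?, 2 ≤ a) : 0 < contFrac l ∧ contFrac l < 1 := by
  induction l with
  | nil => exact absurd rfl hne
  | cons a l ih =>
    have key : 1 < (a : ℚ) + contFrac l := by
      rcases l with _ | ⟨b, l⟩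
      · have : (2 : ℚ) ≤ a := by exact_mod_cast hlast a rfl
        rw [contFrac]; linarith
      · have := ih (cons_ne_nil b l) (fun c hc => hpos c (mem_cons_of_mem a hc)) hlast
        have : (1 : ℚ) ≤ a := by exact_mod_cast hpos a mem_cons_self
        linarith
    rw [contFrac, one_div]
    exact ⟨inv_pos.2 (by linarith), inv_lt_one_of_one_lt₀ key⟩

theorem one_half_lt_contFrac_one_cons {l : List ℕ} (hne : l ≠ []) (hpos : ∀ a ∈ l, 0 < a)
    (hlast : ∀ a ∈ l.getLast?, 2 ≤ a) : 1 / 2 < contFrac (1 :: l) := by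
  obtain ⟨h0, h1⟩ := contFrac_pos_lt_one hne hpos hlast
  rw [contFrac, Nat.cast_one]
  gcongr
  linarith

theorem contFrac_lt_one_half {a : ℕ} {l : List ℕ} (ha : 2 ≤ a) (hpos : ∀ b ∈ l, 0 < b)
    (hlast : ∀ b ∈ (a :: l).getLast?, 2 ≤ b) (hne : a :: l ≠ [2]) :
    contFrac (a :: l) < 1 / 2 := by
  rw [contFrac]
  gcongr
  rcases l with _ | ⟨b, l⟩
  · have : (3 : ℚ) ≤ a := by
      have : a ≠ 2 := fun h => hne (h ▸ rfl)
      exact_mod_cast (show 3 ≤ a by omega)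
    rw [contFrac]; linarith
  · have := (contFrac_pos_lt_one (cons_ne_nil b l) hpos hlast).1
    have : (2 : ℚ) ≤ a := by exact_mod_cast ha
    linarith

theorem SseqQ_one_div_natCast_add {m : ℕ} (hm : 1 ≤ m) {x : ℚ} (hx : 0 < x) :
    SseqQ (1 / (m + x)) =
      (range (2 * x.den)).map (runLength (m * x.den + x.num.natAbs) x.den) := by
  rw [SseqQ, Rat.num_one_div_natCast_add m hx, Rat.den_one_div_natCast_add m hx,
    Int.toNat_natCast]
  exact signRuns_eq x.pos (Nat.le_add_right_of_le (Nat.le_mul_of_pos_left _ hm))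

theorem prefix_SseqQ_one_div_natCast_add {m : ℕ} (hm : 1 ≤ m) {x : ℚ} (hx₁ : 1 / 2 < x)
    (hx₂ : x < 1) : [m + 1, m + 1] <+: SseqQ (1 / (m + x)) := by
  have hx : 0 < x := by linarith
  have hnum_pos : 0 < x.num.natAbs := by simpa using hx.ne'
  have hnum_le : x.num.natAbs ≤ x.den := by
    rw [← Rat.natAbs_num_div_den hx.le, div_lt_one (by exact_mod_cast x.pos)] at hx₂
    exact_mod_cast hx₂.le
  have hden_lt : x.den < 2 * x.num.natAbs := by
    rw [← Rat.natAbs_num_div_den hx.le, div_lt_div_iff₀ two_pos (by exact_mod_cast x.pos)] at hx₁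
    exact_mod_cast (by linarith : (x.den : ℚ) < 2 * x.num.natAbs)
  have h := prefix_map_range (runLength (m * x.den + x.num.natAbs) x.den)
    (by have := x.pos; omega : 2 ≤ 2 * x.den)
  rwa [runLength_mul_add x.pos, runLength_mul_add x.pos, runLength_zero hnum_pos hnum_le,
    runLength_one hden_lt hnum_le, ← SseqQ_one_div_natCast_add hm hx] at h

theorem suffix_SseqQ_one_div_natCast_add {m : ℕ} (hm : 1 ≤ m) {x : ℚ} (hx₀ : 0 < x)
    (hx : x < 1 / 2) : [m, m] <:+ SseqQ (1 / (m + x)) := by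
  have hnum_lt : 2 * x.num.natAbs < x.den := by
    rw [← Rat.natAbs_num_div_den hx₀.le, div_lt_div_iff₀ (by exact_mod_cast x.pos) two_pos] at hx
    exact_mod_cast (by linarith : 2 * (x.num.natAbs : ℚ) < x.den)
  have h := suffix_map_range (runLength (m * x.den + x.num.natAbs) x.den)
    (by have := x.pos; omega : 2 ≤ 2 * x.den)
  rwa [runLength_mul_add x.pos, runLength_mul_add x.pos, runLength_two_mul_sub_two hnum_lt,
    runLength_two_mul_sub_one (by omega), add_zero, ← SseqQ_one_div_natCast_add hm hx₀] at h

/-- in the palindromic decomposition `S(r) = (S₁,S₂,S₁,S₂)` of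
`r = [m, m₂, …]`: if `m₂ = 1` then `(m+1, m+1)` appears in `S₁`; if `m₂ ≥ 2` and
`r ≠ [m, 2]` then `(m, m)` appears in `S₂`. -/
theorem consecutive_in_S1_S2 (m m2 : ℕ) (rest : List ℕ) (hm : 1 ≤ m) (h2 : 0 < m2)
    (hpos : ∀ x ∈ rest, 0 < x)
    (hlast : ∀ x ∈ (m :: m2 :: rest).getLast?, 2 ≤ x)
    (r : ℚ) (hr : r = contFrac (m :: m2 :: rest))
    (S1 S2 : List ℕ) (hdec : SseqQ r = S1 ++ S2 ++ S1 ++ S2)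
    (hS1 : S1.reverse = S1) (hS2 : S2.reverse = S2)
    (hS1h : S1.head? = some (m + 1)) (hS2h : S2.head? = some m) :
    (m2 = 1 → [m + 1, m + 1] <:+: S1) ∧
    (2 ≤ m2 → (m :: m2 :: rest) ≠ [m, 2] → [m, m] <:+: S2) := by
  rw [getLast?_cons_cons] at hlast
  have hx := contFrac_pos_lt_one (cons_ne_nil m2 rest) (forall_mem_cons.2 ⟨h2, hpos⟩) hlast
  replace hr : r = 1 / (m + contFrac (m2 :: rest)) := hr
  refine ⟨fun hm2 => ?_, fun hm2 hne => ?_⟩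
  · subst hm2
    have hrest : rest ≠ [] := by rintro rfl; simp at hlast
    rw [getLast?_cons_of_ne_nil hrest] at hlast
    have h := prefix_SseqQ_one_div_natCast_add hm
      (one_half_lt_contFrac_one_cons hrest hpos hlast) hx.2
    rw [← hr, hdec, append_assoc, append_assoc] at h
    exact (h.pair_of_append (by simp [head?_append, hS2h])).isInfix
  · have h := suffix_SseqQ_one_div_natCast_add hm hx.1
      (contFrac_lt_one_half hm2 hpos hlast (fun h => hne (by rw [h])))
    rw [← hr, hdec, ← reverse_prefix] at h
    simp only [reverse_append, hS1, hS2, append_assoc] at h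
    exact (h.pair_of_append (by simp [head?_append, hS1h])).isInfix
end
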